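/- arXiv:2006.14070 — 2 statements merged into one kernel-verified Lean document; each statement's English description precedes it below -/
import Mathlib

section
/- For every n ≥ 2, the number of standard puzzles of shape 2×n with support {B, E} = {(1,2,4,3), (1,4,2,3)} equals twice the Catalan number C_{n−1}, i.e. 2·(1/n)·binomial(2(n−1), n−1). -/
/-- The rank (1-based) of entry `i` among the four entries of `q`. -/
def puzzleRank {N : ℕ} (q : Fin 4 → Fin N) (i : Fin 4) : ℕ :=
  (Finset.univ.filter (fun k => q k ≤ q i)).card

/-- The pattern (order-isomorphism type) of the `j`-th piece of a 2×n array `f`,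
read bottom-left, bottom-right, top-right, top-left. Row `0` is the bottom row. -/
def piece {n : ℕ} (f : Fin 2 × Fin n → Fin (2 * n)) (j : ℕ) (hj : j + 1 < n) :
    ℕ × ℕ × ℕ × ℕ :=
  let q : Fin 4 → Fin (2 * n) :=
    ![f (0, ⟨j, Nat.lt_of_succ_lt hj⟩), f (0, ⟨j + 1, hj⟩),
      f (1, ⟨j + 1, hj⟩), f (1, ⟨j, Nat.lt_of_succ_lt hj⟩)]
  (puzzleRank q 0, puzzleRank q 1, puzzleRank q 2, puzzleRank q 3)

/-- The number of standard puzzles of shape 2×n all of whose pieces lie in `P`. -/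
noncomputable def puzzleCount (n : ℕ) (P : Set (ℕ × ℕ × ℕ × ℕ)) : ℕ :=
  Nat.card {f : (Fin 2 × Fin n) ≃ Fin (2 * n) //
    ∀ j (hj : j + 1 < n), piece f j hj ∈ P}


/-!
Every piece of pattern B or E has an increasing left column, while a piece of pattern E has a
decreasing right column; hence E can only occur as the last piece, and exchanging the two
entries of the last column matches the puzzles ending in E with the puzzles made of B's only.

A puzzle made of B's only has increasing rows, and each bottom entry lies below the top entry one
column to its left. Reading the values in increasing order and writing `U` for a bottom entry and `D`
for a top entry, this says exactly that every proper nonempty prefix has more `U`s than `D`s: the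
word is a Dyck word `(w)` of semilength `n`, and `w` ranges over the `catalan (n - 1)` Dyck words
of semilength `n - 1`.
-/

open DyckStep Finset

namespace StandardPuzzle

lemma count_take_ofFn {α : Type*} [DecidableEq α] {n : ℕ} (w : Fin n → α) (a : α) (i : ℕ) :
    ((List.ofFn w).take i).count a = #{v : Fin n | (v : ℕ) < i ∧ w v = a} := by
  have hcount : ∀ l : List α, l.count a = (l.map fun x => if x = a then 1 else 0).sum := by
    intro l
    induction l <;> simp_all [List.count_cons, add_comm]
  rw [hcount, List.map_take, List.map_ofFn, List.sum_take_ofFn]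
  simp [sum_boole, filter_filter]

lemma count_U_add_count_D (l : List DyckStep) : l.count U + l.count D = l.length := by
  induction l with
  | nil => rfl
  | cons s l ih => cases s <;> simp <;> omega

lemma _root_.StrictMono.lt_card_filter_lt_iff {α : Type*} [LinearOrder α] {k : ℕ}
    {b : Fin k → α} (hb : StrictMono b) (j : Fin k) (x : α) :
    (j : ℕ) < #{i | b i < x} ↔ b j < x := by
  constructor
  · intro h
    by_contra hx
    have hsub : ({i | b i < x} : Finset (Fin k)) ⊆ Iio j := fun i hi => by
      simp only [mem_filter, mem_univ, true_and, mem_Iio] at hi ⊢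
      exact hb.lt_iff_lt.1 (hi.trans_le (not_lt.1 hx))
    have := card_le_card hsub
    simp only [Fin.card_Iio] at this
    omega
  · intro h
    have hsub : Iic j ⊆ ({i | b i < x} : Finset (Fin k)) := fun i hi => by
      simp only [mem_filter, mem_univ, true_and, mem_Iic] at hi ⊢
      exact (hb.monotone hi).trans_lt h
    simpa using card_le_card hsub

section Rank

variable {N : ℕ} {q : Fin 4 → Fin N}

lemma puzzleRank_lt_puzzleRank_iff {i j : Fin 4} :
    puzzleRank q i < puzzleRank q j ↔ q i < q j := by
  constructor
  · intro h
    by_contra hji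
    exact h.not_ge
      (card_le_card (monotone_filter_right _ fun k _ hk => hk.trans (not_lt.1 hji)))
  · intro h
    refine card_lt_card ⟨monotone_filter_right _ fun k _ hk => hk.trans h.le, fun hsub => ?_⟩
    exact (not_le.2 h) (mem_filter.1 (hsub (mem_filter.2 ⟨mem_univ j, le_rfl⟩))).2

lemma one_le_puzzleRank (i : Fin 4) : 1 ≤ puzzleRank q i :=
  card_pos.2 ⟨i, mem_filter.2 ⟨mem_univ i, le_rfl⟩⟩

lemma puzzleRank_le_four (i : Fin 4) : puzzleRank q i ≤ 4 :=
  (card_filter_le _ _).trans (by simp)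

lemma ranks_eq_patternB_iff :
    (puzzleRank q 0, puzzleRank q 1, puzzleRank q 2, puzzleRank q 3) = (1, 2, 4, 3) ↔
      q 0 < q 1 ∧ q 1 < q 3 ∧ q 3 < q 2 := by
  have h := fun i => And.intro (one_le_puzzleRank (q := q) i) (puzzleRank_le_four (q := q) i)
  have := h 0; have := h 1; have := h 2; have := h 3
  simp only [Prod.mk.injEq, ← puzzleRank_lt_puzzleRank_iff]
  omega

lemma ranks_eq_patternE_iff :
    (puzzleRank q 0, puzzleRank q 1, puzzleRank q 2, puzzleRank q 3) = (1, 4, 2, 3) ↔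
      q 0 < q 2 ∧ q 2 < q 3 ∧ q 3 < q 1 := by
  have h := fun i => And.intro (one_le_puzzleRank (q := q) i) (puzzleRank_le_four (q := q) i)
  have := h 0; have := h 1; have := h 2; have := h 3
  simp only [Prod.mk.injEq, ← puzzleRank_lt_puzzleRank_iff]
  omega

end Rank

section Pieces

variable {α : Type*} [LinearOrder α] {m : ℕ}

def IsBPiece (f : Fin 2 × Fin (m + 1) → α) (j : Fin m) : Prop :=
  f (0, j.castSucc) < f (0, j.succ) ∧ f (0, j.succ) < f (1, j.castSucc) ∧
    f (1, j.castSucc) < f (1, j.succ)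

def IsEPiece (f : Fin 2 × Fin (m + 1) → α) (j : Fin m) : Prop :=
  f (0, j.castSucc) < f (1, j.succ) ∧ f (1, j.succ) < f (1, j.castSucc) ∧
    f (1, j.castSucc) < f (0, j.succ)

lemma piece_mem_iff (f : Fin 2 × Fin (m + 1) → Fin (2 * (m + 1))) (j : ℕ) (hj : j + 1 < m + 1) :
    piece f j hj ∈ ({(1, 2, 4, 3), (1, 4, 2, 3)} : Set (ℕ × ℕ × ℕ × ℕ)) ↔
      IsBPiece f ⟨j, by omega⟩ ∨ IsEPiece f ⟨j, by omega⟩ := by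
  simp only [piece, Set.mem_insert_iff, Set.mem_singleton_iff, ranks_eq_patternB_iff,
    ranks_eq_patternE_iff]
  rfl

lemma puzzleCount_eq_card_isBPiece_or_isEPiece (m : ℕ) :
    puzzleCount (m + 1) {(1, 2, 4, 3), (1, 4, 2, 3)} =
      Nat.card {f : (Fin 2 × Fin (m + 1)) ≃ Fin (2 * (m + 1)) //
        ∀ j, IsBPiece f j ∨ IsEPiece f j} :=
  Nat.card_congr <| Equiv.subtypeEquivRight fun f =>
    ⟨fun h j => (piece_mem_iff f j (by omega)).1 (h j (by omega)),
      fun h j hj => (piece_mem_iff f j hj).2 (h ⟨j, by omega⟩)⟩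

end Pieces

def swapLastColumn (m : ℕ) : Equiv.Perm (Fin 2 × Fin (m + 2)) :=
  Equiv.swap (0, Fin.last _) (1, Fin.last _)

@[simp]
lemma swapLastColumn_apply_castSucc {m : ℕ} (r : Fin 2) (c : Fin (m + 1)) :
    swapLastColumn m (r, c.castSucc) = (r, c.castSucc) :=
  Equiv.swap_apply_of_ne_of_ne (by simp [Fin.castSucc_ne_last]) (by simp [Fin.castSucc_ne_last])

section LastColumn

variable {α : Type*} [LinearOrder α] {m : ℕ} {f : Fin 2 × Fin (m + 2) → α}

lemma not_isBPiece_and_isEPiece {j : Fin (m + 1)} : ¬ (IsBPiece f j ∧ IsEPiece f j) :=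
  fun ⟨hB, hE⟩ => hE.2.1.not_gt hB.2.2

lemma isBPiece_castSucc (h : ∀ j, IsBPiece f j ∨ IsEPiece f j) (j : Fin m) :
    IsBPiece f j.castSucc := by
  have hcol : f (0, j.succ.castSucc) < f (1, j.succ.castSucc) := by
    rcases h j.succ with hB | hE
    · exact hB.1.trans hB.2.1
    · exact hE.1.trans hE.2.1
  refine (h j.castSucc).resolve_right fun hE => ?_
  rw [← Fin.succ_castSucc] at hcol
  exact (hE.2.1.trans hE.2.2).not_gt hcol

lemma isBPiece_comp_swapLastColumn_castSucc (j : Fin m) :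
    IsBPiece (f ∘ swapLastColumn m) j.castSucc ↔ IsBPiece f j.castSucc := by
  simp only [IsBPiece, Fin.succ_castSucc, Function.comp_apply, swapLastColumn_apply_castSucc]

lemma isBPiece_comp_swapLastColumn_last :
    IsBPiece (f ∘ swapLastColumn m) (Fin.last m) ↔ IsEPiece f (Fin.last m) := by
  simp only [IsBPiece, IsEPiece, Function.comp_apply, swapLastColumn_apply_castSucc, Fin.succ_last]
  simp only [swapLastColumn, Equiv.swap_apply_left, Equiv.swap_apply_right]

lemma forall_isBPiece_or_isEPiece_iff :
    (∀ j, IsBPiece f j ∨ IsEPiece f j) ↔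
      (∀ j, IsBPiece f j) ∨ ((∀ j : Fin m, IsBPiece f j.castSucc) ∧ IsEPiece f (Fin.last m)) := by
  constructor
  · intro h
    have hB := isBPiece_castSucc h
    exact (h (Fin.last m)).imp (fun hlast => Fin.forall_fin_succ'.2 ⟨hB, hlast⟩) (And.intro hB)
  · rintro (h | ⟨hB, hE⟩) j
    · exact .inl (h j)
    · induction j using Fin.lastCases with
      | last => exact .inr hE
      | cast j => exact .inl (hB j)

lemma forall_isBPiece_comp_swapLastColumn_iff :
    (∀ j, IsBPiece (f ∘ swapLastColumn m) j) ↔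
      (∀ j : Fin m, IsBPiece f j.castSucc) ∧ IsEPiece f (Fin.last m) := by
  simp only [Fin.forall_fin_succ', isBPiece_comp_swapLastColumn_castSucc,
    isBPiece_comp_swapLastColumn_last]

end LastColumn

lemma card_forall_isBPiece_or_isEPiece (m : ℕ) :
    Nat.card {f : (Fin 2 × Fin (m + 2)) ≃ Fin (2 * (m + 2)) // ∀ j, IsBPiece f j ∨ IsEPiece f j} =
      2 * Nat.card {f : (Fin 2 × Fin (m + 2)) ≃ Fin (2 * (m + 2)) // ∀ j, IsBPiece f j} := by
  classical
  have hdisj : Disjoint (fun f : (Fin 2 × Fin (m + 2)) ≃ Fin (2 * (m + 2)) => ∀ j, IsBPiece f j)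
      (fun f => (∀ j : Fin m, IsBPiece f j.castSucc) ∧ IsEPiece f (Fin.last m)) := by
    simp only [Pi.disjoint_iff, Prop.disjoint_iff]
    exact fun f ⟨hB, _, hE⟩ => not_isBPiece_and_isEPiece ⟨hB _, hE⟩
  have hswap : {f : (Fin 2 × Fin (m + 2)) ≃ Fin (2 * (m + 2)) //
      (∀ j : Fin m, IsBPiece f j.castSucc) ∧ IsEPiece f (Fin.last m)} ≃
      {f : (Fin 2 × Fin (m + 2)) ≃ Fin (2 * (m + 2)) // ∀ j, IsBPiece f j} :=
    Equiv.subtypeEquiv ((swapLastColumn m).equivCongr (Equiv.refl _)) fun f =>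
      forall_isBPiece_comp_swapLastColumn_iff.symm
  rw [Nat.card_congr ((Equiv.subtypeEquivRight fun f => forall_isBPiece_or_isEPiece_iff).trans
    (subtypeOrEquiv _ _ hdisj)), Nat.card_sum, Nat.card_congr hswap, ← two_mul]

section RowWord

variable {k N : ℕ} (f : (Fin 2 × Fin k) ≃ Fin N)

def rowWord : List DyckStep := List.ofFn fun v => if (f.symm v).1 = 0 then U else D

def rowCount (r : Fin 2) (i : ℕ) : ℕ := #{j | (f (r, j) : ℕ) < i}

@[simp]
lemma length_rowWord : (rowWord f).length = N :=
  List.length_ofFn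

lemma range_row (r : Fin 2) : Set.range (fun j => f (r, j)) = {v | (f.symm v).1 = r} := by
  ext v
  refine ⟨by rintro ⟨j, rfl⟩; simp, fun hv => ⟨(f.symm v).2, ?_⟩⟩
  subst hv
  simp

lemma card_lt_symm_fst_eq (r : Fin 2) (i : ℕ) :
    #{v : Fin N | (v : ℕ) < i ∧ (f.symm v).1 = r} = rowCount f r i := by
  refine card_nbij' (fun v => (f.symm v).2) (fun j => f (r, j)) ?_ ?_ ?_ ?_ <;>
    simp only [coe_filter, mem_univ, true_and]
  · rintro v ⟨hv, rfl⟩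
    simpa using hv
  · intro j hj
    simpa using hj
  · rintro v ⟨-, rfl⟩
    simp
  · intro j _
    simp

lemma count_take_rowWord (i : ℕ) :
    ((rowWord f).take i).count U = rowCount f 0 i ∧
      ((rowWord f).take i).count D = rowCount f 1 i := by
  have hletter : ∀ r : Fin 2,
      ((if r = 0 then U else D) = U ↔ r = 0) ∧ ((if r = 0 then U else D) = D ↔ r = 1) := by
    decide
  simp only [rowWord, count_take_ofFn, ← card_lt_symm_fst_eq, hletter, and_self]

lemma rowCount_zero_add_rowCount_one {i : ℕ} (hi : i ≤ N) :
    rowCount f 0 i + rowCount f 1 i = i := by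
  rw [← (count_take_rowWord f i).1, ← (count_take_rowWord f i).2, count_U_add_count_D,
    List.length_take, length_rowWord]
  omega

lemma rowCount_of_le (r : Fin 2) {i : ℕ} (hi : N ≤ i) : rowCount f r i = k := by
  rw [rowCount, filter_true_of_mem fun j _ => (f (r, j)).isLt.trans_le hi, card_univ,
    Fintype.card_fin]

lemma lt_rowCount_iff {r : Fin 2} (hr : StrictMono fun j => f (r, j)) (j : Fin k) (i : ℕ) :
    (j : ℕ) < rowCount f r i ↔ (f (r, j) : ℕ) < i :=
  (Fin.val_strictMono.comp hr).lt_card_filter_lt_iff j i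

variable {f} in
lemma eq_of_rowWord_eq {g : (Fin 2 × Fin k) ≃ Fin N} (hf : ∀ r, StrictMono fun j => f (r, j))
    (hg : ∀ r, StrictMono fun j => g (r, j)) (h : rowWord f = rowWord g) : f = g := by
  have hfst : ∀ v, (f.symm v).1 = (g.symm v).1 := by
    have hletter : ∀ r s : Fin 2, (if r = 0 then U else D) = (if s = 0 then U else D) → r = s := by
      decide
    exact fun v => hletter _ _ (congrFun (List.ofFn_injective h) v)
  ext ⟨r, j⟩
  have hrange : Set.range (fun j => f (r, j)) = Set.range (fun j => g (r, j)) := by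
    simp only [range_row, hfst]
  exact congrArg Fin.val (congrFun (((hf r).range_inj (hg r)).1 hrange) j)

end RowWord

lemma exists_rowWord_eq {k : ℕ} (l : List DyckStep) (hlen : l.length = 2 * k)
    (hU : l.count U = k) :
    ∃ f : (Fin 2 × Fin k) ≃ Fin (2 * k), (∀ r, StrictMono fun j => f (r, j)) ∧ rowWord f = l := by
  set w : Fin (2 * k) → DyckStep := fun v => l[v]'(by rw [hlen]; exact v.isLt)
  have hw : List.ofFn w = l := List.ext_getElem (by simp [hlen]) (by simp [w])
  set s : Finset (Fin (2 * k)) := {v | w v = U}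
  have hs : #s = k := by
    have := count_take_ofFn w U (2 * k)
    rw [List.take_of_length_le (by simp), hw, hU] at this
    refine Eq.trans ?_ this.symm
    exact congrArg card (filter_congr fun v _ => ⟨fun h => ⟨v.isLt, h⟩, And.right⟩)
  have hsc : #sᶜ = k := by
    rw [card_compl, Fintype.card_fin, hs]
    omega
  set f := (finTwoEquiv.prodCongr (Equiv.refl _)).trans
    ((Equiv.boolProdEquivSum _).trans (finSumEquivOfFinset hs hsc))
  have hf0 : ∀ j, f (0, j) = s.orderEmbOfFin hs j := fun j => finSumEquivOfFinset_inl hs hsc j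
  have hf1 : ∀ j, f (1, j) = sᶜ.orderEmbOfFin hsc j := fun j => finSumEquivOfFinset_inr hs hsc j
  refine ⟨f, Fin.forall_fin_two.2 ⟨?_, ?_⟩, ?_⟩
  · simpa only [hf0] using (s.orderEmbOfFin hs).strictMono
  · simpa only [hf1] using (sᶜ.orderEmbOfFin hsc).strictMono
  have hletter : ∀ r j, (if r = 0 then U else D) = w (f (r, j)) := by
    refine Fin.forall_fin_two.2 ⟨fun j => ?_, fun j => ?_⟩
    · rw [if_pos rfl, hf0]
      exact (mem_filter.1 (s.orderEmbOfFin_mem hs j)).2.symm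
    · rw [if_neg one_ne_zero, hf1]
      have := mem_compl.1 (sᶜ.orderEmbOfFin_mem hsc j)
      exact ((DyckStep.dichotomy _).resolve_left fun h => this (mem_filter.2 ⟨mem_univ _, h⟩)).symm
  rw [← hw, rowWord]
  congr 1
  funext v
  obtain ⟨⟨r, j⟩, rfl⟩ := f.surjective v
  rw [Equiv.symm_apply_apply, hletter]

section Ballot

variable {m : ℕ} (f : (Fin 2 × Fin (m + 2)) ≃ Fin (2 * (m + 2)))

variable {f} in
lemma strictMono_row_of_forall_isBPiece (hB : ∀ j, IsBPiece f j) (r : Fin 2) :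
    StrictMono fun j => f (r, j) := by
  fin_cases r
  · exact Fin.strictMono_iff_lt_succ.2 fun j => (hB j).1
  · exact Fin.strictMono_iff_lt_succ.2 fun j => (hB j).2.2

/-- If the top entries of columns `0, …, d` are below `i`, then so are the bottom entries of
columns `0, …, d + 1`, since each bottom entry lies below the top entry to its left; if `d` is the
last column, this would put all `2 * (m + 2)` entries below `i`. -/
lemma rowCount_one_lt_rowCount_zero (hB : ∀ j, IsBPiece f j) {i : ℕ} (hi₀ : 0 < i)
    (hi : i < 2 * (m + 2)) : rowCount f 1 i < rowCount f 0 i := by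
  have hrows := strictMono_row_of_forall_isBPiece hB
  have hsum := rowCount_zero_add_rowCount_one f hi.le
  have hle : rowCount f 1 i ≤ m + 2 := (card_filter_le _ _).trans (by simp)
  obtain hd | ⟨d, hd⟩ : rowCount f 1 i = 0 ∨ ∃ d, rowCount f 1 i = d + 1 :=
    (Nat.eq_zero_or_eq_succ_pred _).imp_right fun h => ⟨_, h⟩
  · omega
  have htd : (f (1, ⟨d, by omega⟩) : ℕ) < i := (lt_rowCount_iff f (hrows 1) _ i).1 (by simp [hd])
  rcases Nat.lt_or_ge d (m + 1) with hdm | hdm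
  · have hbd : (f (0, ⟨d + 1, by omega⟩) : ℕ) < i := (Fin.lt_def.1 (hB ⟨d, hdm⟩).2.1).trans htd
    have := (lt_rowCount_iff f (hrows 0) _ i).2 hbd
    simp only at this
    omega
  · obtain rfl : d = m + 1 := by omega
    have hlast := hB (Fin.last m)
    have hbd : (f (0, Fin.last _) : ℕ) < i := (Fin.lt_def.1 (hlast.2.1.trans hlast.2.2)).trans htd
    have := (lt_rowCount_iff f (hrows 0) _ i).2 hbd
    simp only [Fin.val_last] at this
    omega

lemma isBPiece_of_rowCount_lt (hrows : ∀ r, StrictMono fun j => f (r, j))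
    (hballot : ∀ i, 0 < i → i < 2 * (m + 2) → rowCount f 1 i < rowCount f 0 i)
    (j : Fin (m + 1)) : IsBPiece f j := by
  refine ⟨hrows 0 j.castSucc_lt_succ, ?_, hrows 1 j.castSucc_lt_succ⟩
  -- just above the top entry `t` of column `j` there are `j + 1` top entries, hence at least
  -- `j + 2` bottom entries, so the bottom entry of column `j + 1` is at most `t`
  set i := (f (1, j.castSucc) : ℕ) + 1
  have hi : i < 2 * (m + 2) :=
    (Nat.succ_le_of_lt (hrows 1 j.castSucc_lt_succ)).trans_lt (f (1, j.succ)).isLt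
  have htop := (lt_rowCount_iff f (hrows 1) j.castSucc i).2 (Nat.lt_add_one _)
  have hbot := (lt_rowCount_iff f (hrows 0) j.succ i).1 <| by
    have := hballot i (Nat.succ_pos _) hi
    simp only [Fin.val_castSucc, Fin.val_succ] at htop ⊢
    omega
  have hne : f (0, j.succ) ≠ f (1, j.castSucc) := fun h => by simpa using f.injective h
  exact lt_of_le_of_ne (Fin.le_def.2 (Nat.lt_succ_iff.1 hbot)) hne

def rowDyckWord (hB : ∀ j, IsBPiece f j) : DyckWord where
  toList := rowWord f
  count_U_eq_count_D := by
    have h := count_take_rowWord f (2 * (m + 2))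
    rw [List.take_of_length_le (length_rowWord f).le, rowCount_of_le f 0 le_rfl,
      rowCount_of_le f 1 le_rfl] at h
    rw [h.1, h.2]
  count_D_le_count_U i := by
    rw [(count_take_rowWord f i).1, (count_take_rowWord f i).2]
    rcases Nat.eq_zero_or_pos i with rfl | hi₀
    · have := rowCount_zero_add_rowCount_one f (Nat.zero_le _)
      omega
    rcases Nat.lt_or_ge i (2 * (m + 2)) with hi | hi
    · exact (rowCount_one_lt_rowCount_zero f hB hi₀ hi).le
    · rw [rowCount_of_le f 0 hi, rowCount_of_le f 1 hi]

lemma rowDyckWord_isNested (hB : ∀ j, IsBPiece f j) : (rowDyckWord f hB).IsNested := by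
  refine ⟨DyckWord.toList_ne_nil.1 (List.ne_nil_of_length_pos (by simp [rowDyckWord])),
    fun i hi₀ hi => ?_⟩
  simp only [rowDyckWord, length_rowWord] at hi
  rw [rowDyckWord, (count_take_rowWord f i).1, (count_take_rowWord f i).2]
  exact rowCount_one_lt_rowCount_zero f hB hi₀ hi

lemma rowDyckWord_semilength (hB : ∀ j, IsBPiece f j) :
    (rowDyckWord f hB).semilength = m + 2 := by
  have h := (count_take_rowWord f (2 * (m + 2))).1
  rwa [List.take_of_length_le (length_rowWord f).le, rowCount_of_le f 0 le_rfl] at h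

end Ballot

lemma card_isNested_semilength (n : ℕ) :
    Nat.card {p : DyckWord // p.IsNested ∧ p.semilength = n + 1} = catalan n := by
  rw [← DyckWord.card_dyckWord_semilength_eq_catalan, ← Nat.card_eq_fintype_card]
  refine Nat.card_congr
    { toFun := fun p => ⟨p.1.denest p.2.1, ?_⟩
      invFun := fun q => ⟨q.1.nest, .nest, by simp [q.2]⟩
      left_inv := fun p => Subtype.ext (p.1.nest_denest p.2.1)
      right_inv := fun q => Subtype.ext q.1.denest_nest }
  have := congrArg DyckWord.semilength (p.1.nest_denest p.2.1)
  rw [DyckWord.semilength_nest] at this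
  have := p.2.2
  omega

lemma card_forall_isBPiece (m : ℕ) :
    Nat.card {f : (Fin 2 × Fin (m + 2)) ≃ Fin (2 * (m + 2)) // ∀ j, IsBPiece f j} =
      catalan (m + 1) := by
  rw [← card_isNested_semilength]
  refine Nat.card_congr (Equiv.ofBijective
    (fun f => ⟨rowDyckWord f.1 f.2, rowDyckWord_isNested f.1 f.2, rowDyckWord_semilength f.1 f.2⟩)
    ⟨fun f g h => ?_, fun p => ?_⟩)
  · exact Subtype.ext (eq_of_rowWord_eq (strictMono_row_of_forall_isBPiece f.2)
      (strictMono_row_of_forall_isBPiece g.2) (congrArg (fun p => p.1.toList) h))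
  · obtain ⟨f, hrows, hf⟩ := exists_rowWord_eq p.1.toList
      (by rw [← DyckWord.two_mul_semilength_eq_length, p.2.2]) p.2.2
    have hB : ∀ j, IsBPiece f j := isBPiece_of_rowCount_lt f hrows fun i hi₀ hi => by
      have := p.2.1.2 hi₀ (by rwa [← hf, length_rowWord])
      rwa [← hf, (count_take_rowWord f i).1, (count_take_rowWord f i).2] at this
    exact ⟨⟨f, hB⟩, Subtype.ext (DyckWord.ext hf)⟩

end StandardPuzzle

theorem stmt16 (n : ℕ) (hn : 2 ≤ n) :
    puzzleCount n {(1, 2, 4, 3), (1, 4, 2, 3)} = 2 * catalan (n - 1) := by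
  obtain ⟨m, rfl⟩ : ∃ m, n = m + 2 := ⟨n - 2, by omega⟩
  rw [StandardPuzzle.puzzleCount_eq_card_isBPiece_or_isEPiece,
    StandardPuzzle.card_forall_isBPiece_or_isEPiece, StandardPuzzle.card_forall_isBPiece]
  rfl
end

section
/- For every n ≥ 2, the number of standard puzzles of shape 2×n with support {B, G, T, Y} = {(1,2,4,3), (2,1,3,4), (3,4,2,1), (4,3,1,2)} equals the number of standard puzzles of shape 2×n with support {B, J, R, Y} = {(1,2,4,3), (2,3,1,4), (3,2,4,1), (4,3,1,2)}. -/
/-!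
Two adjacent columns form a piece of either support exactly when their value pairs interlace;
the supports differ only in how the columns are oriented (bottom entry below or above the top
entry). In a {B, G, T, Y}-puzzle all columns have the same orientation, while in a
{B, J, R, Y}-puzzle column `j + 1` has its smaller entry at the bottom exactly when the column
minima increase from column `j` to column `j + 1`, and column `0` is free. Swapping the entries
within columns preserves interlacing, so in both cases a puzzle amounts to an interlacing
sequence of column pairs plus the orientation of column `0`; reorienting the columns is the
bijection.
-/

def supportBGTY : Set (ℕ × ℕ × ℕ × ℕ) :=
  {(1, 2, 4, 3), (2, 1, 3, 4), (3, 4, 2, 1), (4, 3, 1, 2)}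

def supportBJRY : Set (ℕ × ℕ × ℕ × ℕ) :=
  {(1, 2, 4, 3), (2, 3, 1, 4), (3, 2, 4, 1), (4, 3, 1, 2)}

section Interlace
variable {α : Type*} [LinearOrder α]

def Interlace (l h l' h' : α) : Prop :=
  l < l' ∧ l' < h ∧ h < h' ∨ l' < l ∧ l < h' ∧ h' < h

-- `a, b, c, d` are read as in `piece`: `(a, d)` is the left column, `(b, c)` the right one.
theorem bgty_order_iff (a b c d : α) :
    (a < b ∧ b < d ∧ d < c) ∨ (b < a ∧ a < c ∧ c < d) ∨
      (d < c ∧ c < a ∧ a < b) ∨ (c < d ∧ d < b ∧ b < a) ↔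
    Interlace (min a d) (max a d) (min b c) (max b c) ∧ (a < d ↔ b < c) := by
  grind [Interlace]

theorem bjry_order_iff (a b c d : α) :
    (a < b ∧ b < d ∧ d < c) ∨ (c < a ∧ a < b ∧ b < d) ∨
      (d < b ∧ b < a ∧ a < c) ∨ (c < d ∧ d < b ∧ b < a) ↔
    Interlace (min a d) (max a d) (min b c) (max b c) ∧ (b < c ↔ min a d < min b c) := by
  grind [Interlace]

end Interlace

section Rank
variable {N : ℕ} (q : Fin 4 → Fin N)

theorem puzzleRank_bounds (i : Fin 4) : 1 ≤ puzzleRank q i ∧ puzzleRank q i ≤ 4 :=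
  ⟨Finset.card_pos.mpr ⟨i, by simp⟩, (Finset.card_filter_le _ _).trans_eq (Finset.card_fin 4)⟩

theorem puzzleRank_le_puzzleRank {i j : Fin 4} (h : q i ≤ q j) :
    puzzleRank q i ≤ puzzleRank q j :=
  Finset.card_le_card <| Finset.monotone_filter_right _ fun _ _ hk => hk.trans h

theorem puzzleRank_lt_puzzleRank_iff {i j : Fin 4} :
    puzzleRank q i < puzzleRank q j ↔ q i < q j := by
  refine ⟨fun h => lt_of_not_ge fun h' => (puzzleRank_le_puzzleRank q h').not_gt h, fun h => ?_⟩
  refine Finset.card_lt_card ⟨Finset.monotone_filter_right _ fun _ _ hk => hk.trans h.le, ?_⟩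
  intro hsub
  simpa [h.not_ge] using hsub (Finset.mem_filter.mpr ⟨Finset.mem_univ j, le_rfl⟩)

theorem puzzleRank_mem_supportBGTY_iff :
    (puzzleRank q 0, puzzleRank q 1, puzzleRank q 2, puzzleRank q 3) ∈ supportBGTY ↔
      (q 0 < q 1 ∧ q 1 < q 3 ∧ q 3 < q 2) ∨ (q 1 < q 0 ∧ q 0 < q 2 ∧ q 2 < q 3) ∨
      (q 3 < q 2 ∧ q 2 < q 0 ∧ q 0 < q 1) ∨ (q 2 < q 3 ∧ q 3 < q 1 ∧ q 1 < q 0) := by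
  have := puzzleRank_bounds q 0; have := puzzleRank_bounds q 1
  have := puzzleRank_bounds q 2; have := puzzleRank_bounds q 3
  simp only [supportBGTY, Set.mem_insert_iff, Set.mem_singleton_iff, Prod.mk.injEq,
    ← puzzleRank_lt_puzzleRank_iff q]
  omega

theorem puzzleRank_mem_supportBJRY_iff :
    (puzzleRank q 0, puzzleRank q 1, puzzleRank q 2, puzzleRank q 3) ∈ supportBJRY ↔
      (q 0 < q 1 ∧ q 1 < q 3 ∧ q 3 < q 2) ∨ (q 2 < q 0 ∧ q 0 < q 1 ∧ q 1 < q 3) ∨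
      (q 3 < q 1 ∧ q 1 < q 0 ∧ q 0 < q 2) ∨ (q 2 < q 3 ∧ q 3 < q 1 ∧ q 1 < q 0) := by
  have := puzzleRank_bounds q 0; have := puzzleRank_bounds q 1
  have := puzzleRank_bounds q 2; have := puzzleRank_bounds q 3
  simp only [supportBJRY, Set.mem_insert_iff, Set.mem_singleton_iff, Prod.mk.injEq,
    ← puzzleRank_lt_puzzleRank_iff q]
  omega

end Rank

section Columns
variable {ι β : Type*} [LinearOrder β]

def colMin (f : Fin 2 × ι → β) (j : ι) : β := min (f (0, j)) (f (1, j))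
def colMax (f : Fin 2 × ι → β) (j : ι) : β := max (f (0, j)) (f (1, j))
def rising (f : Fin 2 × ι → β) (j : ι) : Bool := decide (f (0, j) < f (1, j))

theorem apply_zero_eq_cond (f : Fin 2 × ι → β) (j : ι) :
    f (0, j) = bif rising f j then colMin f j else colMax f j := by
  by_cases h : f (0, j) < f (1, j) <;> simp [rising, colMin, colMax, h, le_of_lt, not_lt.1]

theorem apply_one_eq_cond (f : Fin 2 × ι → β) (j : ι) :
    f (1, j) = bif rising f j then colMax f j else colMin f j := by
  by_cases h : f (0, j) < f (1, j) <;> simp [rising, colMin, colMax, h, le_of_lt, not_lt.1]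

theorem eq_of_colMin_colMax_rising {f g : Fin 2 × ι → β} (hmin : colMin f = colMin g)
    (hmax : colMax f = colMax g) (hrising : rising f = rising g) : f = g := by
  funext ⟨i, j⟩
  match i with
  | 0 => rw [apply_zero_eq_cond f, apply_zero_eq_cond g, hmin, hmax, hrising]
  | 1 => rw [apply_one_eq_cond f, apply_one_eq_cond g, hmin, hmax, hrising]

def flipColumns (s : ι → Bool) : Fin 2 × ι ≃ Fin 2 × ι :=
  Equiv.prodCongrLeft fun j => bif s j then Fin.revPerm else Equiv.refl _

def reorient (t : ι → Bool) (f : Fin 2 × ι ≃ β) : Fin 2 × ι ≃ β :=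
  (flipColumns fun j => rising f j != t j).trans f

variable (t : ι → Bool) (f : Fin 2 × ι ≃ β)

theorem reorient_apply (i : Fin 2) (j : ι) :
    reorient t f (i, j) = f (bif rising f j != t j then i.rev else i, j) := by
  cases h : rising f j != t j <;> simp [reorient, flipColumns, h]

theorem colMin_reorient : colMin (reorient t f) = colMin f := by
  funext j
  simp only [colMin, reorient_apply]
  cases rising f j != t j
  · rfl
  · exact min_comm _ _

theorem colMax_reorient : colMax (reorient t f) = colMax f := by
  funext j
  simp only [colMax, reorient_apply]
  cases rising f j != t j
  · rfl
  · exact max_comm _ _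

theorem rising_reorient : rising (reorient t f) = t := by
  funext j
  have hne : f (0, j) ≠ f (1, j) := f.injective.ne (by simp)
  simp only [rising, reorient_apply]
  rcases hne.lt_or_gt with h | h <;> cases t j <;> simp [h, h.not_gt]

end Columns

section Puzzle
variable {n : ℕ} {β : Type*} [LinearOrder β]

def InterlacedAt (f : Fin 2 × Fin n → β) (j : ℕ) (hj : j + 1 < n) : Prop :=
  Interlace (colMin f ⟨j, by omega⟩) (colMax f ⟨j, by omega⟩)
    (colMin f ⟨j + 1, hj⟩) (colMax f ⟨j + 1, hj⟩)

theorem interlacedAt_reorient (t : Fin n → Bool) (f : Fin 2 × Fin n ≃ β) (j : ℕ)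
    (hj : j + 1 < n) : InterlacedAt (reorient t f) j hj ↔ InterlacedAt f j hj := by
  rw [InterlacedAt, InterlacedAt, colMin_reorient, colMax_reorient]

def HasSupportIn (P : Set (ℕ × ℕ × ℕ × ℕ)) (f : Fin 2 × Fin n → Fin (2 * n)) : Prop :=
  ∀ j (hj : j + 1 < n), piece f j hj ∈ P

theorem piece_mem_supportBGTY_iff (f : Fin 2 × Fin n → Fin (2 * n)) (j : ℕ) (hj : j + 1 < n) :
    piece f j hj ∈ supportBGTY ↔
      InterlacedAt f j hj ∧ rising f ⟨j, by omega⟩ = rising f ⟨j + 1, hj⟩ := by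
  rw [piece, puzzleRank_mem_supportBGTY_iff]
  simp only [Matrix.cons_val_zero, Matrix.cons_val_one, Matrix.cons_val_two,
    Matrix.cons_val_three, Matrix.head_cons, Matrix.tail_cons, rising, decide_eq_decide]
  exact bgty_order_iff _ _ _ _

theorem piece_mem_supportBJRY_iff (f : Fin 2 × Fin n → Fin (2 * n)) (j : ℕ) (hj : j + 1 < n) :
    piece f j hj ∈ supportBJRY ↔ InterlacedAt f j hj ∧
      rising f ⟨j + 1, hj⟩ = decide (colMin f ⟨j, by omega⟩ < colMin f ⟨j + 1, hj⟩) := by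
  rw [piece, puzzleRank_mem_supportBJRY_iff]
  simp only [Matrix.cons_val_zero, Matrix.cons_val_one, Matrix.cons_val_two,
    Matrix.cons_val_three, Matrix.head_cons, Matrix.tail_cons, rising, decide_eq_decide]
  exact bjry_order_iff _ _ _ _

theorem rising_eq_of_hasSupportIn_supportBGTY {f : Fin 2 × Fin n → Fin (2 * n)}
    (hf : HasSupportIn supportBGTY f) (j : Fin n) : rising f j = rising f ⟨0, j.pos⟩ := by
  obtain ⟨j, hj⟩ := j
  induction j with
  | zero => rfl
  | succ j ih => exact ((piece_mem_supportBGTY_iff f j hj).1 (hf j hj)).2.symm.trans (ih _)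

def ascentSigns (f : Fin 2 × Fin n → β) : Fin n → Bool
  | ⟨0, h⟩ => rising f ⟨0, h⟩
  | ⟨j + 1, h⟩ => decide (colMin f ⟨j, by omega⟩ < colMin f ⟨j + 1, h⟩)

def toBJRY (f : Fin 2 × Fin n ≃ β) : Fin 2 × Fin n ≃ β :=
  reorient (ascentSigns f) f

def toBGTY (g : Fin 2 × Fin n ≃ β) : Fin 2 × Fin n ≃ β :=
  reorient (fun j => rising g ⟨0, j.pos⟩) g

variable {f g : Fin 2 × Fin n ≃ Fin (2 * n)}

theorem hasSupportIn_toBJRY (hf : HasSupportIn supportBGTY f) :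
    HasSupportIn supportBJRY (toBJRY f) := by
  intro j hj
  rw [piece_mem_supportBJRY_iff, toBJRY, interlacedAt_reorient, rising_reorient, colMin_reorient]
  exact ⟨((piece_mem_supportBGTY_iff f j hj).1 (hf j hj)).1, rfl⟩

theorem hasSupportIn_toBGTY (hg : HasSupportIn supportBJRY g) :
    HasSupportIn supportBGTY (toBGTY g) := by
  intro j hj
  rw [piece_mem_supportBGTY_iff, toBGTY, interlacedAt_reorient, rising_reorient]
  exact ⟨((piece_mem_supportBJRY_iff g j hj).1 (hg j hj)).1, rfl⟩

theorem toBGTY_toBJRY (hf : HasSupportIn supportBGTY f) : toBGTY (toBJRY f) = f := by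
  refine DFunLike.coe_injective (eq_of_colMin_colMax_rising ?_ ?_ ?_)
  · rw [toBGTY, colMin_reorient, toBJRY, colMin_reorient]
  · rw [toBGTY, colMax_reorient, toBJRY, colMax_reorient]
  · funext j
    rw [toBGTY, rising_reorient, toBJRY, rising_reorient, rising_eq_of_hasSupportIn_supportBGTY hf]
    rfl

theorem toBJRY_toBGTY (hg : HasSupportIn supportBJRY g) : toBJRY (toBGTY g) = g := by
  refine DFunLike.coe_injective (eq_of_colMin_colMax_rising ?_ ?_ ?_)
  · rw [toBJRY, colMin_reorient, toBGTY, colMin_reorient]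
  · rw [toBJRY, colMax_reorient, toBGTY, colMax_reorient]
  · funext ⟨j, hj⟩
    rw [toBJRY, rising_reorient]
    cases j with
    | zero => exact congrFun (rising_reorient _ g) _
    | succ j =>
      rw [ascentSigns, toBGTY, colMin_reorient]
      exact (((piece_mem_supportBJRY_iff g j hj).1 (hg j hj)).2).symm

def supportBGTYEquivBJRY :
    {f : (Fin 2 × Fin n) ≃ Fin (2 * n) // HasSupportIn supportBGTY f} ≃
      {g : (Fin 2 × Fin n) ≃ Fin (2 * n) // HasSupportIn supportBJRY g} where
  toFun f := ⟨toBJRY f, hasSupportIn_toBJRY f.2⟩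
  invFun g := ⟨toBGTY g, hasSupportIn_toBGTY g.2⟩
  left_inv f := Subtype.ext (toBGTY_toBJRY f.2)
  right_inv g := Subtype.ext (toBJRY_toBGTY g.2)

end Puzzle

theorem stmt18_general (n : ℕ) :
    puzzleCount n {(1, 2, 4, 3), (2, 1, 3, 4), (3, 4, 2, 1), (4, 3, 1, 2)}
      = puzzleCount n {(1, 2, 4, 3), (2, 3, 1, 4), (3, 2, 4, 1), (4, 3, 1, 2)} :=
  Nat.card_congr supportBGTYEquivBJRY

theorem stmt18 (n : ℕ) (hn : 2 ≤ n) :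
    puzzleCount n {(1, 2, 4, 3), (2, 1, 3, 4), (3, 4, 2, 1), (4, 3, 1, 2)}
      = puzzleCount n {(1, 2, 4, 3), (2, 3, 1, 4), (3, 2, 4, 1), (4, 3, 1, 2)} :=
  stmt18_general n
end
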